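/- With g_-, g_0, g_1 as above, the second Tanaka prolongation g_2, consisting of degree-2 derivation maps d : g_- → g_0 ⊕ g_1 (d(g_{-2}) ⊆ g_0, d(g_{-1}) ⊆ g_1) satisfying d([y,z]) = [d(y),z] + [y,d(z)], is exactly 1-dimensional, spanned by x8: (x1 ↦ −x4, x2 ↦ −x6, x3 ↦ −x7). Moreover the third prolongation g_3 vanishes. -/

import Mathlib

/-!
An element `D` of `g_2` is determined by `D x1 = a x4 + b x5 ∈ g_0` and by
`D x2, D x3 ∈ g_1`, i.e. by six coefficients. The `g_-`-components of the derivation identity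
on the pairs `(x1, x2)` and `(x1, x3)` express the four `g_1`-coefficients through `a` and `b`;
the `g_0`-component on `(x2, x3)`, where `[x2, x3] = 4 x1`, then forces `b = 0`, so `D = -a x8`.
For `E ∈ g_3` the `g_0`-components of the identity on `(x1, x2)` and `(x1, x3)` already kill
all four coefficients of `E x1 ∈ g_1` and `E x2, E x3 ∈ ℝ x8`. Coefficients are read off
using the linear independence of `x4` and `x5`.
-/

/-- The Heisenberg Lie algebra `g_- = ℝx1 ⊕ ℝx2 ⊕ ℝx3` with `[x2,x3] = 4x1`. -/
def hBracket (u v : Fin 3 → ℝ) : Fin 3 → ℝ :=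
  ![4 * (u 1 * v 2 - u 2 * v 1), 0, 0]

/-- Endomorphisms of `g_-` (candidates for elements of `g_0`). -/
abbrev W3 := (Fin 3 → ℝ) →ₗ[ℝ] (Fin 3 → ℝ)

/-- Degree-one maps `g_- → g_{-1} ⊕ g_0` (candidates for elements of `g_1`). -/
abbrev P1 := (Fin 3 → ℝ) →ₗ[ℝ] ((Fin 3 → ℝ) × W3)

/-- Degree-two maps `g_- → g_0 ⊕ g_1` (candidates for elements of `g_2`). -/
abbrev P2 := (Fin 3 → ℝ) →ₗ[ℝ] (W3 × P1)

/-- `x4 : x1 ↦ −2x1, x2 ↦ −x2, x3 ↦ −x3` spanning `g_0` with `x5`. -/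
noncomputable def X4 : W3 := Matrix.toLin' !![(-2 : ℝ), 0, 0; 0, -1, 0; 0, 0, -1]

/-- `x5 : x1 ↦ 0, x2 ↦ −x3, x3 ↦ x2` spanning `g_0` with `x4`. -/
noncomputable def X5 : W3 := Matrix.toLin' !![(0 : ℝ), 0, 0; 0, 0, 1; 0, -1, 0]

/-- `x6 : x1 ↦ −x2, x2 ↦ −6x5, x3 ↦ 2x4` spanning `g_1` with `x7`. -/
noncomputable def X6 : P1 :=
  LinearMap.prod (Matrix.toLin' !![(0 : ℝ), 0, 0; -1, 0, 0; 0, 0, 0])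
    (((LinearMap.proj 1 : (Fin 3 → ℝ) →ₗ[ℝ] ℝ).smulRight ((-6 : ℝ) • X5)) +
      ((LinearMap.proj 2 : (Fin 3 → ℝ) →ₗ[ℝ] ℝ).smulRight ((2 : ℝ) • X4)))

/-- `x7 : x1 ↦ −x3, x2 ↦ −2x4, x3 ↦ −6x5` spanning `g_1` with `x6`. -/
noncomputable def X7 : P1 :=
  LinearMap.prod (Matrix.toLin' !![(0 : ℝ), 0, 0; 0, 0, 0; -1, 0, 0])
    (((LinearMap.proj 1 : (Fin 3 → ℝ) →ₗ[ℝ] ℝ).smulRight ((-2 : ℝ) • X4)) +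
      ((LinearMap.proj 2 : (Fin 3 → ℝ) →ₗ[ℝ] ℝ).smulRight ((-6 : ℝ) • X5)))

/-- `x8 : x1 ↦ −x4, x2 ↦ −x6, x3 ↦ −x7`, as a degree-two map `g_- → g_0 ⊕ g_1`. -/
noncomputable def X8 : P2 :=
  LinearMap.prod
    (((LinearMap.proj 0 : (Fin 3 → ℝ) →ₗ[ℝ] ℝ).smulRight (-X4)))
    (((LinearMap.proj 1 : (Fin 3 → ℝ) →ₗ[ℝ] ℝ).smulRight (-X6)) +
      ((LinearMap.proj 2 : (Fin 3 → ℝ) →ₗ[ℝ] ℝ).smulRight (-X7)))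

lemma X4_apply (v : Fin 3 → ℝ) : X4 v = ![-2 * v 0, -v 1, -v 2] := by
  ext i; fin_cases i <;> simp [X4, Matrix.mulVec, dotProduct, Fin.sum_univ_three]

lemma X5_apply (v : Fin 3 → ℝ) : X5 v = ![0, v 2, -v 1] := by
  ext i; fin_cases i <;> simp [X5, Matrix.mulVec, dotProduct, Fin.sum_univ_three]

lemma X6_apply (v : Fin 3 → ℝ) :
    X6 v = (![0, -v 0, 0], (2 * v 2) • X4 + (-6 * v 1) • X5) := by
  refine Prod.ext ?_ ?_
  · ext i; fin_cases i <;> simp [X6, dotProduct, Fin.sum_univ_three]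
  · change v 1 • ((-6 : ℝ) • X5) + v 2 • ((2 : ℝ) • X4) = _
    module

lemma X7_apply (v : Fin 3 → ℝ) :
    X7 v = (![0, 0, -v 0], (-2 * v 1) • X4 + (-6 * v 2) • X5) := by
  refine Prod.ext ?_ ?_
  · ext i; fin_cases i <;> simp [X7, dotProduct, Fin.sum_univ_three]
  · change v 1 • ((-2 : ℝ) • X4) + v 2 • ((-6 : ℝ) • X5) = _
    module

lemma X8_apply (v : Fin 3 → ℝ) :
    X8 v = ((-v 0) • X4, (-v 1) • X6 + (-v 2) • X7) := by
  simp only [X8, LinearMap.prod_apply, Function.prod, LinearMap.add_apply,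
    LinearMap.smulRight_apply, LinearMap.proj_apply]
  congr 1 <;> module

lemma linearIndependent_X4_X5 : LinearIndependent ℝ ![X4, X5] := by
  refine LinearIndependent.pair_iff.2 fun s t h => ⟨?_, ?_⟩
  · simpa [X4_apply, X5_apply] using congrFun (LinearMap.congr_fun h (Pi.single 1 1)) 1
  · simpa [X4_apply, X5_apply] using congrFun (LinearMap.congr_fun h (Pi.single 1 1)) 2

lemma X8_ne_zero : X8 ≠ 0 := by
  intro h
  have := congrFun (congrArg (fun D : P2 => (D (Pi.single 0 1)).1 (Pi.single 0 1)) h) 0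
  simp [X8_apply, X4_apply] at this

lemma hBracket_single_one_two :
    hBracket (Pi.single 1 1) (Pi.single 2 1) = (4 : ℝ) • Pi.single 0 1 := by
  ext i; fin_cases i <;> simp [hBracket]

def MemG2 (D : P2) : Prop :=
  (∀ v : Fin 3 → ℝ, v 1 = 0 ∧ v 2 = 0 →
      (D v).2 = 0 ∧ ∃ a b : ℝ, (D v).1 = a • X4 + b • X5) ∧
  (∀ v : Fin 3 → ℝ, v 0 = 0 →
      (D v).1 = 0 ∧ ∃ a b : ℝ, (D v).2 = a • X6 + b • X7) ∧
  (∀ y z : Fin 3 → ℝ,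
    (0 : Fin 3 → ℝ) = (D y).1 z + ((D y).2 z).1 - (D z).1 y - ((D z).2 y).1 ∧
    (D (hBracket y z)).1 = ((D y).2 z).2 - ((D z).2 y).2 ∧
    (D (hBracket y z)).2 = 0)

def MemG3 (E : (Fin 3 → ℝ) →ₗ[ℝ] (P1 × P2)) : Prop :=
  (∀ v : Fin 3 → ℝ, v 1 = 0 ∧ v 2 = 0 →
      (E v).2 = 0 ∧ ∃ a b : ℝ, (E v).1 = a • X6 + b • X7) ∧
  (∀ v : Fin 3 → ℝ, v 0 = 0 →
      (E v).1 = 0 ∧ ∃ a : ℝ, (E v).2 = a • X8) ∧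
  (∀ y z : Fin 3 → ℝ,
    (0 : Fin 3 → ℝ) = ((E y).1 z).1 - ((E z).1 y).1 ∧
    (0 : W3) = ((E y).1 z).2 + ((E y).2 z).1 - ((E z).1 y).2 - ((E z).2 y).1 ∧
    (E (hBracket y z)).1 = ((E y).2 z).2 - ((E z).2 y).2 ∧
    (E (hBracket y z)).2 = 0)

lemma memG2_smul_X8 (c : ℝ) : MemG2 (c • X8) := by
  refine ⟨fun v hv => ?_, fun v hv => ?_, fun y z => ⟨?_, ?_, ?_⟩⟩
  · simp only [LinearMap.smul_apply, X8_apply, Prod.smul_fst, Prod.smul_snd, hv.1, hv.2]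
    exact ⟨by simp, -(c * v 0), 0, by module⟩
  · simp only [LinearMap.smul_apply, X8_apply, Prod.smul_fst, Prod.smul_snd, hv]
    exact ⟨by simp, -(c * v 1), -(c * v 2), by module⟩
  · ext i
    fin_cases i <;> simp [X8_apply, X6_apply, X7_apply, X4_apply] <;> ring
  · simp only [LinearMap.smul_apply, X8_apply, X6_apply, X7_apply, hBracket, Prod.smul_fst,
      Prod.smul_snd, Prod.snd_add, LinearMap.add_apply, Matrix.cons_val_zero]
    module
  · simp [X8_apply, hBracket]

lemma exists_eq_smul_X8_of_memG2 {D : P2} (hD : MemG2 D) : ∃ c : ℝ, D = c • X8 := by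
  obtain ⟨hdeg0, hdeg1, hbr⟩ := hD
  obtain ⟨hD0g1, a, b, hD0⟩ := hdeg0 (Pi.single 0 1) (by simp)
  obtain ⟨hD1g0, p, q, hD1⟩ := hdeg1 (Pi.single 1 1) (by simp)
  obtain ⟨hD2g0, r, s, hD2⟩ := hdeg1 (Pi.single 2 1) (by simp)
  have h01 : p = a ∧ q = b := by
    have h := (hbr (Pi.single 0 1) (Pi.single 1 1)).1
    rw [hD0, hD0g1, hD1g0, hD1] at h
    have h1 : 0 = -a + p := by simpa [X4_apply, X5_apply, X6_apply, X7_apply] using congrFun h 1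
    have h2 : 0 = -b + q := by simpa [X4_apply, X5_apply, X6_apply, X7_apply] using congrFun h 2
    constructor <;> linarith
  have h02 : r = -b ∧ s = a := by
    have h := (hbr (Pi.single 0 1) (Pi.single 2 1)).1
    rw [hD0, hD0g1, hD2g0, hD2] at h
    have h1 : 0 = b + r := by simpa [X4_apply, X5_apply, X6_apply, X7_apply] using congrFun h 1
    have h2 : 0 = -a + s := by simpa [X4_apply, X5_apply, X6_apply, X7_apply] using congrFun h 2
    constructor <;> linarith
  have h12 : (4 * a - 2 * p - 2 * s) • X4 + (4 * b + 6 * q - 6 * r) • X5 = 0 := by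
    have h := (hbr (Pi.single 1 1) (Pi.single 2 1)).2.1
    rw [hBracket_single_one_two, map_smul, Prod.smul_fst, hD0, hD1, hD2] at h
    simp only [LinearMap.add_apply, LinearMap.smul_apply, Prod.snd_add, Prod.smul_snd, X6_apply,
      X7_apply, Pi.single_eq_same, ne_eq, Fin.reduceEq, not_false_eq_true, Pi.single_eq_of_ne] at h
    linear_combination (norm := module) h
  have hb : b = 0 := by
    have := (LinearIndependent.pair_iff.1 linearIndependent_X4_X5 _ _ h12).2
    linarith [h01.2, h02.1]
  obtain ⟨hp, hq⟩ := h01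
  obtain ⟨hr, hs⟩ := h02
  refine ⟨-a, (Pi.basisFun ℝ (Fin 3)).ext fun i => ?_⟩
  fin_cases i <;> refine Prod.ext ?_ ?_ <;>
    simp [X8_apply, hD0, hD0g1, hD1, hD1g0, hD2, hD2g0, hp, hq, hr, hs, hb] <;> module

lemma memG2_iff {D : P2} : MemG2 D ↔ ∃ c : ℝ, D = c • X8 :=
  ⟨exists_eq_smul_X8_of_memG2, by rintro ⟨c, rfl⟩; exact memG2_smul_X8 c⟩

lemma eq_zero_of_memG3 {E : (Fin 3 → ℝ) →ₗ[ℝ] (P1 × P2)} (hE : MemG3 E) : E = 0 := by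
  obtain ⟨hdeg0, hdeg1, hbr⟩ := hE
  obtain ⟨hE0g2, c, d, hE0⟩ := hdeg0 (Pi.single 0 1) (by simp)
  obtain ⟨hE1g1, a₁, hE1⟩ := hdeg1 (Pi.single 1 1) (by simp)
  obtain ⟨hE2g1, a₂, hE2⟩ := hdeg1 (Pi.single 2 1) (by simp)
  have h01 : (a₁ - 2 * d) • X4 + (-6 * c) • X5 = 0 := by
    have h := (hbr (Pi.single 0 1) (Pi.single 1 1)).2.1
    rw [hE0, hE0g2, hE1g1, hE1] at h
    simp only [LinearMap.add_apply, LinearMap.smul_apply, LinearMap.zero_apply, Prod.snd_add,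
      Prod.smul_snd, Prod.fst_zero, Prod.snd_zero, Prod.smul_fst, X6_apply, X7_apply, X8_apply,
      Pi.single_eq_same, ne_eq, Fin.reduceEq, not_false_eq_true, Pi.single_eq_of_ne] at h
    linear_combination (norm := module) -h
  have h02 : (2 * c + a₂) • X4 + (-6 * d) • X5 = 0 := by
    have h := (hbr (Pi.single 0 1) (Pi.single 2 1)).2.1
    rw [hE0, hE0g2, hE2g1, hE2] at h
    simp only [LinearMap.add_apply, LinearMap.smul_apply, LinearMap.zero_apply, Prod.snd_add,
      Prod.smul_snd, Prod.fst_zero, Prod.snd_zero, Prod.smul_fst, X6_apply, X7_apply, X8_apply,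
      Pi.single_eq_same, ne_eq, Fin.reduceEq, not_false_eq_true, Pi.single_eq_of_ne] at h
    linear_combination (norm := module) -h
  obtain ⟨ha₁, hc⟩ := LinearIndependent.pair_iff.1 linearIndependent_X4_X5 _ _ h01
  obtain ⟨ha₂, hd⟩ := LinearIndependent.pair_iff.1 linearIndependent_X4_X5 _ _ h02
  have hc0 : c = 0 := by linarith
  have hd0 : d = 0 := by linarith
  have ha₁0 : a₁ = 0 := by linarith
  have ha₂0 : a₂ = 0 := by linarith
  refine (Pi.basisFun ℝ (Fin 3)).ext fun i => ?_
  fin_cases i <;> refine Prod.ext ?_ ?_ <;>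
    simp [hE0, hE0g2, hE1, hE1g1, hE2, hE2g1, hc0, hd0, ha₁0, ha₂0]

/-- The second Tanaka prolongation `g_2` of the Heisenberg algebra,
consisting of degree-two maps `d : g_- → g_0 ⊕ g_1` (with `d(g_{-2}) ⊆ g_0`,
`d(g_{-1}) ⊆ g_1`) satisfying the derivation property `d([y,z]) = [d(y),z] + [y,d(z)]`
(written out componentwise in the graded prolongation), is exactly 1-dimensional,
spanned by `x8`.  Moreover the third prolongation `g_3` vanishes. -/
theorem tanaka_g2_and_g3 :
    ((∀ D : P2,
      ((∀ v : Fin 3 → ℝ, v 1 = 0 ∧ v 2 = 0 →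
          (D v).2 = 0 ∧ ∃ a b : ℝ, (D v).1 = a • X4 + b • X5) ∧
       (∀ v : Fin 3 → ℝ, v 0 = 0 →
          (D v).1 = 0 ∧ ∃ a b : ℝ, (D v).2 = a • X6 + b • X7) ∧
       (∀ y z : Fin 3 → ℝ,
         (0 : Fin 3 → ℝ) = (D y).1 z + ((D y).2 z).1 - (D z).1 y - ((D z).2 y).1 ∧
         (D (hBracket y z)).1 = ((D y).2 z).2 - ((D z).2 y).2 ∧
         (D (hBracket y z)).2 = 0))
      ↔ ∃ a : ℝ, D = a • X8) ∧ X8 ≠ 0) ∧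
    (∀ E : (Fin 3 → ℝ) →ₗ[ℝ] (P1 × P2),
      ((∀ v : Fin 3 → ℝ, v 1 = 0 ∧ v 2 = 0 →
          (E v).2 = 0 ∧ ∃ a b : ℝ, (E v).1 = a • X6 + b • X7) ∧
       (∀ v : Fin 3 → ℝ, v 0 = 0 →
          (E v).1 = 0 ∧ ∃ a : ℝ, (E v).2 = a • X8) ∧
       (∀ y z : Fin 3 → ℝ,
         (0 : Fin 3 → ℝ) = ((E y).1 z).1 - ((E z).1 y).1 ∧
         (0 : W3) = ((E y).1 z).2 + ((E y).2 z).1 - ((E z).1 y).2 - ((E z).2 y).1 ∧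
         (E (hBracket y z)).1 = ((E y).2 z).2 - ((E z).2 y).2 ∧
         (E (hBracket y z)).2 = 0))
      → E = 0) :=
  ⟨⟨fun _ => memG2_iff, X8_ne_zero⟩, fun _ => eq_zero_of_memG3⟩
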